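/- arXiv:1810.06186 — 2 statements merged into one kernel-verified Lean document; each statement's English description precedes it below -/
import Mathlib

section
/- Let G10 be the graph with nine vertices u_1, …, u_9 and edges u_iu_{i+1} and u_iu_{i+3} for each i modulo 9. Let G be a clique expansion of G10, and assume that every proper induced subgraph G' of G satisfies χ(G') ≤ ⌈5ω(G')/4⌉. Then χ(G) ≤ ⌈5ω(G)/4⌉. -/
/-!
Write `a w` for the size of the clique `Q_w`; every clique of `G10` (an edge, or a triangle
`{r, r+3, r+6}`) then has total weight at most `ω = ω(G)`. A window argument on `ℤ/9` yields `j`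
such that the three edges `{j, j+1}`, `{j+1, j+2}`, `{j+2, j+3}` have weight `< ω`, while every
other clique of `G10` is dominated by one of the pairwise non-adjacent vertices `j+4, j+6, j+8`.
Deleting one vertex from each of `Q_{j+4}, Q_{j+6}, Q_{j+8}` therefore removes a stable set and
lowers the clique number, so `χ(G) ≤ ⌈5(ω-1)/4⌉ + 1 ≤ ⌈5ω/4⌉`.
-/

open SimpleGraph

/-- The gem: a path 0-1-2-3 on 4 vertices plus a fifth vertex 4 adjacent to all of them. -/
def gem : SimpleGraph (Fin 5) :=
  SimpleGraph.fromEdgeSet {s(0,1), s(1,2), s(2,3), s(4,0), s(4,1), s(4,2), s(4,3)}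

/-- `G` is `H`-free: no induced subgraph of `G` is isomorphic to `H`. -/
def InducedFree {W V : Type*} (H : SimpleGraph W) (G : SimpleGraph V) : Prop :=
  ¬ Nonempty (H ↪g G)

/-- `G` is (P5, gem)-free. -/
def P5GemFree {V : Type*} (G : SimpleGraph V) : Prop :=
  InducedFree (SimpleGraph.pathGraph 5) G ∧ InducedFree gem G

/-- `G` is a clique expansion of `H` via `f`: the fibers of `f` are non-empty cliques, and for
vertices in distinct fibers, adjacency in `G` is governed by adjacency in `H`. -/
def IsCliqueExpansion {V W : Type*} (G : SimpleGraph V) (H : SimpleGraph W) (f : V → W) : Prop :=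
  Function.Surjective f ∧ (∀ w : W, G.IsClique {v | f v = w}) ∧
    ∀ u v : V, f u ≠ f v → (G.Adj u v ↔ H.Adj (f u) (f v))

/-- The graph `G_10`: nine vertices `u_0, …, u_8` with edges `u_i u_{i+1}` and `u_i u_{i+3}`
for each `i` modulo 9. -/
def G10 : SimpleGraph (Fin 9) :=
  SimpleGraph.fromRel (fun i j => j = i + 1 ∨ j = i + 3)

open Finset

namespace SimpleGraph

variable {V : Type*} {G : SimpleGraph V}

theorem cliqueNum_induce_add_one_le [Finite V] {s : Set V}
    (h : ∀ K : Finset V, G.IsClique (K : Set V) → (K : Set V) ⊆ s → #K + 1 ≤ G.cliqueNum) :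
    (G.induce s).cliqueNum + 1 ≤ G.cliqueNum := by
  obtain ⟨t, ht⟩ := (G.induce s).exists_isNClique_cliqueNum
  rw [isNClique_induce_iff] at ht
  exact ht.card_eq ▸ h _ ht.isClique (map_subtype_subset t)

theorem Colorable.succ_of_isIndepSet_compl {s : Set V} {n : ℕ} (hc : (G.induce s).Colorable n)
    (hs : G.IsIndepSet sᶜ) : G.Colorable (n + 1) := by
  classical
  obtain ⟨c⟩ := hc
  refine ⟨Coloring.mk (fun v => if h : v ∈ s then (c ⟨v, h⟩).castSucc else Fin.last n) ?_⟩
  intro u v huv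
  by_cases hu : u ∈ s <;> by_cases hv : v ∈ s <;> simp only [hu, hv, dite_true, dite_false]
  · exact fun h => c.valid (show (G.induce s).Adj ⟨u, hu⟩ ⟨v, hv⟩ from huv)
      (Fin.castSucc_injective _ h)
  · exact (Fin.castSucc_lt_last _).ne
  · exact (Fin.castSucc_lt_last _).ne'
  · exact absurd huv (hs hu hv (G.ne_of_adj huv))

end SimpleGraph

namespace IsCliqueExpansion

open SimpleGraph

variable {V W : Type*} {G : SimpleGraph V} {H : SimpleGraph W} {f : V → W}

theorem adj_of_eq (hexp : IsCliqueExpansion G H f) {u v : V} (h : f u = f v) (huv : u ≠ v) :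
    G.Adj u v :=
  hexp.2.1 (f v) h rfl huv

theorem isClique_preimage (hexp : IsCliqueExpansion G H f) {C : Set W} (hC : H.IsClique C) :
    G.IsClique (f ⁻¹' C) := by
  intro u hu v hv huv
  by_cases h : f u = f v
  · exact hexp.adj_of_eq h huv
  · exact (hexp.2.2 u v h).2 (hC hu hv h)

theorem isClique_image (hexp : IsCliqueExpansion G H f) {K : Set V} (hK : G.IsClique K) :
    H.IsClique (f '' K) := by
  rintro _ ⟨u, hu, rfl⟩ _ ⟨v, hv, rfl⟩ h
  exact (hexp.2.2 u v h).1 (hK hu hv (ne_of_apply_ne f h))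

theorem isIndepSet_image (hexp : IsCliqueExpansion G H f) {x : W → V} (hx : ∀ w, f (x w) = w)
    {S : Set W} (hS : H.IsIndepSet S) : G.IsIndepSet (x '' S) := by
  rintro _ ⟨a, ha, rfl⟩ _ ⟨b, hb, rfl⟩ hne hadj
  have hab : a ≠ b := ne_of_apply_ne x hne
  have hHadj := (hexp.2.2 (x a) (x b) (by rwa [hx, hx])).1 hadj
  rw [hx, hx] at hHadj
  exact hS ha hb hab hHadj

variable [Fintype V] [DecidableEq W]

theorem card_fiber_pos (hexp : IsCliqueExpansion G H f) (w : W) : 0 < #{v | f v = w} := by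
  obtain ⟨v, rfl⟩ := hexp.1 w
  exact card_pos.2 ⟨v, mem_filter.2 ⟨mem_univ v, rfl⟩⟩

theorem sum_card_fiber_le_cliqueNum (hexp : IsCliqueExpansion G H f) {C : Finset W}
    (hC : H.IsClique (C : Set W)) :
    ∑ w ∈ C, #{v | f v = w} ≤ G.cliqueNum := by
  rw [sum_card_fiberwise_eq_card_filter]
  exact IsClique.card_le_cliqueNum (tc := (hexp.isClique_preimage hC).subset fun v => by simp)

/-- A clique of `G` avoiding the vertices `x t` is either small or extends by one of them. -/
theorem cliqueNum_induce_compl_add_one_le (hexp : IsCliqueExpansion G H f) {x : W → V}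
    (hx : ∀ w, f (x w) = w) (S : Set W)
    (h : ∀ C : Finset W, H.IsClique (C : Set W) →
      ∑ w ∈ C, #{v | f v = w} + 1 ≤ G.cliqueNum ∨ ∃ t ∈ S, ∀ c ∈ C, t ≠ c → H.Adj t c) :
    (G.induce (x '' S)ᶜ).cliqueNum + 1 ≤ G.cliqueNum := by
  classical
  refine cliqueNum_induce_add_one_le fun K hK hKS => ?_
  have hC : H.IsClique (K.image f : Set W) := by
    rw [coe_image]
    exact hexp.isClique_image hK
  rcases h _ hC with hsmall | ⟨t, htS, hdom⟩
  · calc #K + 1 = ∑ w ∈ K.image f, #{v ∈ K | f v = w} + 1 := by rw [← card_eq_sum_card_image]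
      _ ≤ ∑ w ∈ K.image f, #{v | f v = w} + 1 := by
        gcongr
        exact subset_univ K
      _ ≤ G.cliqueNum := hsmall
  · have hxK : x t ∉ K := fun hmem => hKS hmem ⟨t, htS, rfl⟩
    have hins : G.IsClique (insert (x t) K : Set V) := by
      refine isClique_insert.2 ⟨hK, fun b hb hne => ?_⟩
      by_cases hfb : f b = t
      · exact hexp.adj_of_eq (by rw [hx, hfb]) hne
      · refine (hexp.2.2 _ _ (by rwa [hx, ne_comm])).2 ?_
        rw [hx]
        exact hdom (f b) (mem_image_of_mem f hb) (Ne.symm hfb)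
    rw [← card_insert_of_notMem hxK]
    exact IsClique.card_le_cliqueNum (tc := by rwa [coe_insert])

end IsCliqueExpansion

set_option maxRecDepth 10000 in
theorem exists_three_consecutive_notMem (T : Finset (Fin 9)) (hT : ∀ j ∈ T, j + 3 ∉ T) :
    ∃ j, ∀ i < 3, j + i ∉ T := by
  revert T
  decide

namespace G10

instance : DecidableRel G10.Adj := fun a b => decidable_of_iff' _ (SimpleGraph.fromRel_adj _ a b)

theorem isClique_triangle (r : Fin 9) : G10.IsClique ({r, r + 3, r + 6} : Finset (Fin 9)) := by
  revert r
  decide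

theorem sum_triangle (a : Fin 9 → ℕ) (r : Fin 9) :
    ∑ w ∈ {r, r + 3, r + 6}, a w = a r + a (r + 3) + a (r + 6) := by
  have hne : r ∉ ({r + 3, r + 6} : Finset (Fin 9)) ∧ r + 3 ≠ r + 6 := by
    revert r
    decide
  rw [sum_insert hne.1, sum_pair hne.2, add_assoc]

theorem isIndepSet_dominators (j : Fin 9) :
    G10.IsIndepSet ({j + 4, j + 6, j + 8} : Finset (Fin 9)) := by
  revert j
  decide

set_option maxRecDepth 10000 in
theorem isClique_subset_edge_or_dominated (j : Fin 9) (C : Finset (Fin 9))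
    (hC : G10.IsClique (C : Set (Fin 9))) :
    (∃ i < 3, C ⊆ {j + i, j + i + 1}) ∨
      ∃ t ∈ ({j + 4, j + 6, j + 8} : Finset (Fin 9)), ∀ c ∈ C, t ≠ c → G10.Adj t c := by
  revert j C
  decide

/-- Two edges `{j, j+1}` and `{j+3, j+4}` cannot both have weight `ω`: together with the
triangles through `j` and `j+1` they would force `a (j+6) + a (j+7) ≤ 0`. -/
theorem exists_slack_window (a : Fin 9 → ℕ) (ω : ℕ) (hpos : ∀ w, 0 < a w)
    (hclique : ∀ C : Finset (Fin 9), G10.IsClique (C : Set (Fin 9)) → ∑ w ∈ C, a w ≤ ω) :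
    ∃ j, ∀ i < 3, a (j + i) + a (j + i + 1) < ω := by
  obtain ⟨j, hj⟩ := exists_three_consecutive_notMem {j | ω ≤ a j + a (j + 1)} fun j hj hj3 => by
    simp only [mem_filter, mem_univ, true_and, add_right_comm j 3 1] at hj hj3
    have h0 := hclique _ (isClique_triangle j)
    have h1 := hclique _ (isClique_triangle (j + 1))
    rw [sum_triangle] at h0 h1
    have h6 := hpos (j + 6)
    omega
  exact ⟨j, fun i hi => by simpa using hj i hi⟩

theorem sum_add_one_le_or_dominated {a : Fin 9 → ℕ} {ω : ℕ} {j : Fin 9}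
    (hslack : ∀ i < 3, a (j + i) + a (j + i + 1) < ω) (C : Finset (Fin 9))
    (hC : G10.IsClique (C : Set (Fin 9))) :
    ∑ w ∈ C, a w + 1 ≤ ω ∨
      ∃ t ∈ ({j + 4, j + 6, j + 8} : Finset (Fin 9)), ∀ c ∈ C, t ≠ c → G10.Adj t c := by
  refine (isClique_subset_edge_or_dominated j C hC).imp_left fun ⟨i, hi, hCi⟩ => ?_
  have hne : ∀ k : Fin 9, k ≠ k + 1 := by decide
  calc ∑ w ∈ C, a w + 1 ≤ ∑ w ∈ {j + i, j + i + 1}, a w + 1 := by gcongr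
    _ ≤ ω := by rw [sum_pair (hne _)]; exact hslack i hi

end G10

theorem Nat.five_mul_ceilDiv_four_add_one_le {m n : ℕ} (h : m + 1 ≤ n) :
    5 * m ⌈/⌉ 4 + 1 ≤ 5 * n ⌈/⌉ 4 := by
  rw [Nat.ceilDiv_eq_add_pred_div, Nat.ceilDiv_eq_add_pred_div]
  omega

/-- If `G` is a clique expansion of `G_10` and every proper induced subgraph `G'` of `G`
satisfies `χ(G') ≤ ⌈5·ω(G')/4⌉`, then `χ(G) ≤ ⌈5·ω(G)/4⌉`. -/
theorem cliqueExpansion_G10_bound {V : Type*} [Fintype V] (G : SimpleGraph V)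
    (f : V → Fin 9) (hexp : IsCliqueExpansion G G10 f)
    (hind : ∀ s : Set V, s ≠ Set.univ →
      (G.induce s).chromaticNumber ≤ ((5 * (G.induce s).cliqueNum ⌈/⌉ 4 : ℕ) : ℕ∞)) :
    G.chromaticNumber ≤ ((5 * G.cliqueNum ⌈/⌉ 4 : ℕ) : ℕ∞) := by
  obtain ⟨j, hslack⟩ := G10.exists_slack_window _ G.cliqueNum hexp.card_fiber_pos
    fun _ => hexp.sum_card_fiber_le_cliqueNum
  obtain ⟨x, hx⟩ := hexp.1.hasRightInverse
  set X := x '' ({j + 4, j + 6, j + 8} : Finset (Fin 9))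
  have hω : (G.induce Xᶜ).cliqueNum + 1 ≤ G.cliqueNum :=
    hexp.cliqueNum_induce_compl_add_one_le hx _ (G10.sum_add_one_le_or_dominated hslack)
  have hcol : (G.induce Xᶜ).Colorable (5 * (G.induce Xᶜ).cliqueNum ⌈/⌉ 4) :=
    chromaticNumber_le_iff_colorable.1
      (hind _ (Set.compl_ne_univ.2 (Set.Nonempty.image _ ⟨j + 4, by simp⟩)))
  have hX : G.IsIndepSet Xᶜᶜ := by
    rw [compl_compl]
    exact hexp.isIndepSet_image hx (G10.isIndepSet_dominators j)
  calc G.chromaticNumber ≤ (5 * (G.induce Xᶜ).cliqueNum ⌈/⌉ 4 + 1 : ℕ) :=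
        (hcol.succ_of_isIndepSet_compl hX).chromaticNumber_le
    _ ≤ (5 * G.cliqueNum ⌈/⌉ 4 : ℕ) := by exact_mod_cast Nat.five_mul_ceilDiv_four_add_one_le hω
end

section
/- Let G be a graph in the class H*, and assume that every proper induced subgraph G' of G satisfies χ(G') ≤ ⌈5ω(G')/4⌉. Then χ(G) ≤ ⌈5ω(G)/4⌉. -/
open SimpleGraph

/-- `X` is complete to `Y`: every vertex of `X` is adjacent to every vertex of `Y`. -/
def CompleteTo {V : Type*} (G : SimpleGraph V) (X Y : Set V) : Prop :=
  ∀ x ∈ X, ∀ y ∈ Y, G.Adj x y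

/-- `X` is anticomplete to `Y`: no vertex of `X` is adjacent to any vertex of `Y`. -/
def AnticompleteTo {V : Type*} (G : SimpleGraph V) (X Y : Set V) : Prop :=
  ∀ x ∈ X, ∀ y ∈ Y, ¬ G.Adj x y

/-- `X` is a homogeneous set: every vertex outside `X` with a neighbor in `X` is
complete to `X`. -/
def IsHomogeneousSet {V : Type*} (G : SimpleGraph V) (X : Set V) : Prop :=
  ∀ v ∉ X, (∃ x ∈ X, G.Adj v x) → ∀ x ∈ X, G.Adj v x

/-- A partition witnessing membership in the class `H` (here `A 0, …, A 6` play the roles of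
`A_1, …, A_7`). -/
structure IsHPartition {V : Type*} (G : SimpleGraph V) (A : Fin 7 → Set V) : Prop where
  nonempty : ∀ i, (A i).Nonempty
  covers : (⋃ i, A i) = Set.univ
  disjoint : ∀ i j, i ≠ j → Disjoint (A i) (A j)
  p4free : ∀ i, InducedFree (SimpleGraph.pathGraph 4) (G.induce (A i))
  c12 : CompleteTo G (A 0) (A 1)
  c15 : CompleteTo G (A 0) (A 4)
  c16 : CompleteTo G (A 0) (A 5)
  a13 : AnticompleteTo G (A 0) (A 2)
  a14 : AnticompleteTo G (A 0) (A 3)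
  a17 : AnticompleteTo G (A 0) (A 6)
  c32 : CompleteTo G (A 2) (A 1)
  c34 : CompleteTo G (A 2) (A 3)
  c36 : CompleteTo G (A 2) (A 5)
  a35 : AnticompleteTo G (A 2) (A 4)
  a37 : AnticompleteTo G (A 2) (A 6)
  c45 : CompleteTo G (A 3) (A 4)
  c46 : CompleteTo G (A 3) (A 5)
  a42 : AnticompleteTo G (A 3) (A 1)
  a47 : AnticompleteTo G (A 3) (A 6)
  a25 : AnticompleteTo G (A 1) (A 4)
  a26 : AnticompleteTo G (A 1) (A 5)
  a27 : AnticompleteTo G (A 1) (A 6)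
  a56 : AnticompleteTo G (A 4) (A 5)
  a57 : AnticompleteTo G (A 4) (A 6)
  hom : ∀ C : (G.induce (A 6)).ConnectedComponent,
    IsHomogeneousSet G (Subtype.val '' C.supp)

/-- The class `H` of connected (P5, gem)-free graphs admitting the seven-set partition. -/
def InClassH {V : Type*} (G : SimpleGraph V) : Prop :=
  G.Connected ∧ P5GemFree G ∧ ∃ A : Fin 7 → Set V, IsHPartition G A

/-- A partition witnessing membership in the class `H*`: an `H`-partition in which
`A 0, …, A 4` (the sets `A_1, …, A_5`) and the vertex set of each connected component of the
subgraph induced by `A 6` (the set `A_7`) are cliques. -/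
def IsHStarPartition {V : Type*} (G : SimpleGraph V) (A : Fin 7 → Set V) : Prop :=
  IsHPartition G A ∧ (∀ i : Fin 7, i.val < 5 → G.IsClique (A i)) ∧
    ∀ C : (G.induce (A 6)).ConnectedComponent, G.IsClique (Subtype.val '' C.supp)

/-- The class `H*`. -/
def InClassHStar {V : Type*} (G : SimpleGraph V) : Prop :=
  G.Connected ∧ P5GemFree G ∧ ∃ A : Fin 7 → Set V, IsHStarPartition G A

/-!
Suppose `χ(G) > k := ⌈5ω/4⌉`. Every proper induced subgraph is `k`-colourable, so `G` has
minimum degree at least `k` and no vertex whose neighbourhood lies inside that of another vertex;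
on the blown-up 5-cycle `A 0, …, A 4` this forces inequalities between the block sizes. They let
us choose five stable sets, each made of two vertices from non-adjacent cycle blocks and one vertex
from each of up to five components of `G[A 6]`, whose removal lowers every clique by four.
Colouring the rest with `⌈5(ω - 4)/4⌉ = k - 5` colours and each stable set with a colour of its
own gives a `k`-colouring, a contradiction.
-/

lemma CompleteTo.symm {V : Type*} {G : SimpleGraph V} {X Y : Set V} (h : CompleteTo G X Y) :
    CompleteTo G Y X :=
  fun y hy x hx => (h x hx y hy).symm

lemma AnticompleteTo.symm {V : Type*} {G : SimpleGraph V} {X Y : Set V}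
    (h : AnticompleteTo G X Y) : AnticompleteTo G Y X :=
  fun y hy x hx hxy => h x hx y hy hxy.symm

lemma AnticompleteTo.union_right {V : Type*} {G : SimpleGraph V} {X Y Z : Set V}
    (hY : AnticompleteTo G X Y) (hZ : AnticompleteTo G X Z) : AnticompleteTo G X (Y ∪ Z) :=
  fun x hx w hw => hw.elim (hY x hx w) (hZ x hx w)

lemma Set.ncard_le_ncard_sdiff_add_ncard_inter {α : Type*} [Finite α] {K X Y T : Set α}
    (hKT : K ⊆ Tᶜ) (h : K ⊆ X ∪ Y) : K.ncard ≤ (X \ T).ncard + (K ∩ Y).ncard := by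
  refine (Set.ncard_le_ncard (t := X \ T ∪ K ∩ Y) fun x hx => ?_).trans (Set.ncard_union_le _ _)
  rcases h hx with hX | hY
  exacts [.inl ⟨hX, hKT hx⟩, .inr ⟨hx, hY⟩]

lemma Set.Finite.exists_embedding_range_subset {α β : Type*} [Fintype α] {s : Set β}
    (hs : s.Finite) (h : Fintype.card α ≤ s.ncard) : ∃ f : α ↪ β, Set.range f ⊆ s := by
  obtain ⟨f, hf⟩ := Function.Embedding.exists_of_card_le_finset (s := hs.toFinset)
    (by rwa [← Set.ncard_eq_toFinset_card s hs])
  exact ⟨f, by simpa using hf⟩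

open Finset Function in
lemma exists_injective_forall_mem {ι κ V : Type*} [Fintype ι] [DecidableEq κ] [Finite V]
    {A : κ → Set V} (hA : Pairwise (Disjoint on A)) (b : ι → κ)
    (hb : ∀ i, #{m | b m = i} ≤ (A i).ncard) :
    ∃ f : ι → V, f.Injective ∧ ∀ m, f m ∈ A (b m) := by
  have he : ∀ i, ∃ e : {m // b m = i} ↪ V, Set.range e ⊆ A i := fun i =>
    (A i).toFinite.exists_embedding_range_subset (by simpa [Fintype.card_subtype] using hb i)
  choose e he using he
  let g : (Σ i, {m // b m = i}) → V := fun p => e p.1 p.2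
  have hg : g.Injective := by
    rintro ⟨i, x⟩ ⟨j, y⟩ (hxy : e i x = e j y)
    obtain rfl : i = j := by
      by_contra hij
      exact Set.disjoint_left.1 (hA hij) (he i ⟨x, rfl⟩) (hxy ▸ he j ⟨y, rfl⟩)
    rw [(e i).injective hxy]
  exact ⟨g ∘ (Equiv.sigmaFiberEquiv b).symm, hg.comp (Equiv.injective _),
    fun m => he _ ⟨_, rfl⟩⟩

lemma five_mul_ceilDiv_four_mono {a b : ℕ} (h : a ≤ b) : 5 * a ⌈/⌉ 4 ≤ 5 * b ⌈/⌉ 4 := by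
  simp only [Nat.ceilDiv_eq_add_pred_div]
  omega

lemma five_mul_sub_four_ceilDiv_four_add_five {w : ℕ} (h : 4 ≤ w) :
    5 * (w - 4) ⌈/⌉ 4 + 5 = 5 * w ⌈/⌉ 4 := by
  simp only [Nat.ceilDiv_eq_add_pred_div]
  omega

namespace SimpleGraph

variable {V : Type*} {G : SimpleGraph V}

lemma IsClique.ncard_le_cliqueNum [Finite V] {s : Set V} (hs : G.IsClique s) :
    s.ncard ≤ G.cliqueNum := by
  have := Fintype.ofFinite s
  rw [Set.ncard_eq_toFinset_card']
  exact IsClique.card_le_cliqueNum (tc := by simpa using hs)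

lemma IsClique.union_of_completeTo {s t : Set V} (hs : G.IsClique s) (ht : G.IsClique t)
    (hst : CompleteTo G s t) : G.IsClique (s ∪ t) :=
  Set.pairwise_union.2 ⟨hs, ht, fun a ha b hb _ => ⟨hst a ha b hb, (hst a ha b hb).symm⟩⟩

lemma ncard_add_ncard_le_cliqueNum [Finite V] {s t : Set V} (hs : G.IsClique s)
    (ht : G.IsClique t) (hst : CompleteTo G s t) : s.ncard + t.ncard ≤ G.cliqueNum := by
  have hdisj : Disjoint s t := Set.disjoint_left.2 fun x hxs hxt => G.irrefl (hst x hxs x hxt)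
  rw [← Set.ncard_union_eq hdisj]
  exact (hs.union_of_completeTo ht hst).ncard_le_cliqueNum

lemma exists_isClique_ncard_eq_cliqueNum_induce (s : Set V) :
    ∃ t ⊆ s, G.IsClique t ∧ t.ncard = (G.induce s).cliqueNum := by
  obtain ⟨t, ht⟩ := (G.induce s).exists_isNClique_cliqueNum
  refine ⟨Subtype.val '' (t : Set s), by simp, isClique_induce_iff.1 ht.isClique, ?_⟩
  rw [Set.ncard_image_of_injective _ Subtype.val_injective, Set.ncard_coe_finset, ht.card_eq]

lemma IsClique.ncard_le_cliqueNum_induce [Finite V] {s t : Set V} (ht : G.IsClique t)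
    (hts : t ⊆ s) : t.ncard ≤ (G.induce s).cliqueNum := by
  have hpre : (G.induce s).IsClique (Subtype.val ⁻¹' t) := by
    rwa [isClique_induce_iff, Subtype.image_preimage_coe, Set.inter_eq_right.2 hts]
  have := hpre.ncard_le_cliqueNum
  rwa [Set.ncard_preimage_of_injective_subset_range Subtype.val_injective
    (by rwa [Subtype.range_coe])] at this

lemma IsClique.subset_insert_neighborSet {K : Set V} (hK : G.IsClique K) {v : V} (hv : v ∈ K) :
    K ⊆ Insert.insert v (G.neighborSet v) :=
  fun x hx => (eq_or_ne x v).imp id fun h => hK hv hx h.symm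

lemma IsClique.subset_union_or_subset_union {K X Y Z : Set V} (hK : G.IsClique K)
    (hKXYZ : K ⊆ X ∪ Y ∪ Z) (hXZ : AnticompleteTo G X Z) (hd : Disjoint X Z) :
    K ⊆ X ∪ Y ∨ K ⊆ Y ∪ Z := by
  by_cases hX : ∃ w ∈ K, w ∈ X
  · obtain ⟨w, hwK, hwX⟩ := hX
    refine .inl fun x hx => (hKXYZ hx).resolve_right fun hxZ => ?_
    exact hXZ w hwX x hxZ (hK hwK hx fun hwx => Set.disjoint_left.1 hd hwX (hwx ▸ hxZ))
  · simp only [not_exists, not_and] at hX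
    exact .inr fun x hx => (or_assoc.1 (hKXYZ hx)).resolve_left (hX x hx)

lemma ncard_neighborSet_lt_of_subset [Finite V] {v : V} {X : Set V}
    (h : G.neighborSet v ⊆ X) (hv : v ∈ X) : (G.neighborSet v).ncard < X.ncard :=
  Set.ncard_lt_ncard (ssubset_of_subset_not_superset h fun hX => G.irrefl (hX hv))

lemma Colorable.of_coloring_induce_compl_singleton {n : ℕ} {u : V}
    (c : (G.induce {u}ᶜ).Coloring (Fin n)) (a : Fin n)
    (ha : ∀ w (hw : w ≠ u), G.Adj u w → c ⟨w, hw⟩ ≠ a) : G.Colorable n := by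
  classical
  refine ⟨Coloring.mk (fun w => if hw : w = u then a else c ⟨w, hw⟩) fun {x y} hxy => ?_⟩
  by_cases hx : x = u <;> by_cases hy : y = u
  · subst hx hy
    exact absurd hxy G.irrefl
  · subst hx
    simpa [hy] using (ha y hy hxy).symm
  · subst hy
    simpa [hx] using ha x hx hxy.symm
  · simpa [hx, hy] using c.valid (show (G.induce {u}ᶜ).Adj ⟨x, hx⟩ ⟨y, hy⟩ from hxy)

lemma Colorable.of_induce_compl_singleton_of_ncard_neighborSet_lt [Finite V] {n : ℕ} {u : V}
    (hu : (G.neighborSet u).ncard < n) (h : (G.induce {u}ᶜ).Colorable n) : G.Colorable n := by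
  obtain ⟨c⟩ := h
  let used : Set (Fin n) := Set.range fun w : G.neighborSet u => c ⟨w, (G.ne_of_adj w.2).symm⟩
  have hused : used.ncard < (Set.univ : Set (Fin n)).ncard := by
    rw [Set.ncard_univ, Nat.card_eq_fintype_card, Fintype.card_fin, ← Nat.card_coe_set_eq]
    exact (Finite.card_range_le _).trans_lt (by rwa [Nat.card_coe_set_eq])
  obtain ⟨a, -, ha⟩ := Set.exists_mem_notMem_of_ncard_lt_ncard hused
  exact of_coloring_induce_compl_singleton c a fun w hw huw hca => ha ⟨⟨w, huw⟩, hca⟩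

lemma Colorable.of_induce_compl_singleton_of_neighborSet_subset {n : ℕ} {u v : V} (huv : u ≠ v)
    (hN : G.neighborSet u ⊆ G.neighborSet v) (h : (G.induce {u}ᶜ).Colorable n) :
    G.Colorable n := by
  obtain ⟨c⟩ := h
  exact of_coloring_induce_compl_singleton c (c ⟨v, huv.symm⟩) fun w hw huw =>
    c.valid (hN huw).symm

lemma Colorable.of_induce_compl_iUnion_isIndepSet {ι : Type*} [Fintype ι] {S : ι → Set V}
    (hS : ∀ j, G.IsIndepSet (S j)) {m : ℕ} (h : (G.induce (⋃ j, S j)ᶜ).Colorable m) :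
    G.Colorable (m + Fintype.card ι) := by
  classical
  obtain ⟨c⟩ := h
  let f : V → Fin m ⊕ ι := fun v =>
    if hv : ∃ j, v ∈ S j then .inr hv.choose else .inl (c ⟨v, by simpa using hv⟩)
  have hf : ∀ {x y}, G.Adj x y → f x ≠ f y := by
    intro x y hxy hfxy
    by_cases hx : ∃ j, x ∈ S j <;> by_cases hy : ∃ j, y ∈ S j <;>
      simp only [f, hx, hy, dite_true, dite_false, reduceCtorEq, Sum.inr.injEq,
        Sum.inl.injEq] at hfxy
    · exact hS _ hx.choose_spec (hfxy ▸ hy.choose_spec) (G.ne_of_adj hxy) hxy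
    · exact c.valid (show (G.induce (⋃ j, S j)ᶜ).Adj ⟨x, _⟩ ⟨y, _⟩ from hxy) hfxy
  simpa using (Coloring.mk f hf).colorable

lemma exists_isIndepSet_min_le_ncard_supp_inter [Finite V] (G : SimpleGraph V) (n : ℕ) :
    ∃ P : Fin n → Set V, (∀ j, G.IsIndepSet (P j)) ∧
      ∀ C : G.ConnectedComponent, min n C.supp.ncard ≤ (C.supp ∩ ⋃ j, P j).ncard := by
  have hf : ∀ C : G.ConnectedComponent, ∃ f : Fin (min n C.supp.ncard) ↪ V,
      Set.range f ⊆ C.supp := fun C =>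
    C.supp.toFinite.exists_embedding_range_subset (by simp)
  choose f hf using hf
  let P : Fin n → Set V := fun j => {x | ∃ C, ∃ h : j.val < min n C.supp.ncard, f C ⟨j, h⟩ = x}
  refine ⟨P, ?_, fun C => ?_⟩
  · rintro j _ ⟨C, hC, rfl⟩ _ ⟨D, hD, rfl⟩ hne hadj
    obtain rfl : C = D := by
      rw [← hf C (Set.mem_range_self _), ← hf D (Set.mem_range_self _)]
      exact ConnectedComponent.connectedComponentMk_eq_of_adj hadj
    exact hne rfl
  · calc min n C.supp.ncard = (Set.range (f C)).ncard := by
          rw [Set.ncard_range_of_injective (f C).injective, Nat.card_eq_fintype_card,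
            Fintype.card_fin]
      _ ≤ (C.supp ∩ ⋃ j, P j).ncard := by
          refine Set.ncard_le_ncard (Set.range_subset_iff.2 fun k => ⟨hf C ⟨k, rfl⟩, ?_⟩)
          exact Set.mem_iUnion.2 ⟨⟨k, k.2.trans_le (min_le_left _ _)⟩, C, k.2, rfl⟩

end SimpleGraph

/-- `A 0, …, A 4` is a blown-up 5-cycle `A 0 – A 1 – A 2 – A 3 – A 4 – A 0`; these are its
non-adjacent pairs of blocks. -/
def cycleNonadjPairs : Finset (Fin 7 × Fin 7) := {(0, 2), (0, 3), (1, 3), (1, 4), (2, 4)}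

/-- A design `d` prescribes five stable sets, the `j`-th taking one vertex from each of `A (d j 0)`
and `A (d j 1)`; it takes `blockCount d i` vertices from `A i`. -/
def blockCount (d : Fin 5 → Fin 2 → Fin 7) (i : Fin 7) : ℕ :=
  (Finset.univ.filter fun m : Fin 5 × Fin 2 => d m.1 m.2 = i).card

/-- The bounds on the block sizes `a i` given by the cliques `A 0 ∪ A 1`, `A 1 ∪ A 2`,
`A 3 ∪ A 4`, `A 4 ∪ A 0`, `A 0 ∪ K` and `A 2 ∪ A 3 ∪ K`, for a clique `K ⊆ A 5` of size `κ`. -/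
structure CliqueBounds (a : Fin 7 → ℕ) (κ ω : ℕ) : Prop where
  le01 : a 0 + a 1 ≤ ω
  le12 : a 1 + a 2 ≤ ω
  le34 : a 3 + a 4 ≤ ω
  le40 : a 4 + a 0 ≤ ω
  le05 : a 0 + κ ≤ ω
  le235 : a 2 + a 3 + κ ≤ ω

namespace CliqueBounds

variable {a : Fin 7 → ℕ} {κ ω : ℕ}

lemma mono {b : Fin 7 → ℕ} (h : CliqueBounds a κ ω) (hba : ∀ i, b i ≤ a i) :
    CliqueBounds b κ ω := by
  obtain ⟨h01, h12, h34, h40, h05, h235⟩ := h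
  have := hba 0; have := hba 1; have := hba 2; have := hba 3; have := hba 4
  constructor <;> omega

lemma exists_design (hb : CliqueBounds a κ ω) (hκ : 1 ≤ κ) (h1 : 2 ≤ a 1) (h4 : 2 ≤ a 4)
    (hdeg1 : 5 * ω ⌈/⌉ 4 < a 0 + a 1 + a 2) (hdeg4 : 5 * ω ⌈/⌉ 4 < a 3 + a 4 + a 0) :
    4 ≤ ω ∧ ∃ d : Fin 5 → Fin 2 → Fin 7, (∀ j, (d j 0, d j 1) ∈ cycleNonadjPairs) ∧
      (∀ i, blockCount d i ≤ a i) ∧ CliqueBounds (fun i => a i - blockCount d i) κ (ω - 4) := by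
  obtain ⟨h01, h12, h34, h40, h05, h235⟩ := hb
  rw [Nat.ceilDiv_eq_add_pred_div] at hdeg1 hdeg4
  refine ⟨by omega, ?_⟩
  -- The balanced design fails only when `A 0 ∪ A 5` is nearly a maximum clique; then the
  -- designs below take more vertices from `A 0`.
  by_cases hA : a 0 + κ + 2 ≤ ω
  · refine ⟨![![0, 2], ![1, 3], ![2, 4], ![0, 3], ![1, 4]], by decide, ?_⟩
    rw [show blockCount ![![0, 2], ![1, 3], ![2, 4], ![0, 3], ![1, 4]] = ![2, 2, 2, 2, 2, 0, 0]
      by decide]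
    exact ⟨fun i => by fin_cases i <;> simp <;> omega, by constructor <;> simp <;> omega⟩
  by_cases hB : a 0 + κ + 1 ≤ ω
  · refine ⟨![![0, 2], ![0, 2], ![0, 3], ![1, 3], ![2, 4]], by decide, ?_⟩
    rw [show blockCount ![![0, 2], ![0, 2], ![0, 3], ![1, 3], ![2, 4]] = ![3, 1, 3, 2, 1, 0, 0]
      by decide]
    exact ⟨fun i => by fin_cases i <;> simp <;> omega, by constructor <;> simp <;> omega⟩
  · refine ⟨![![0, 2], ![0, 2], ![0, 3], ![0, 3], ![1, 4]], by decide, ?_⟩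
    rw [show blockCount ![![0, 2], ![0, 2], ![0, 3], ![0, 3], ![1, 4]] = ![4, 1, 2, 2, 1, 0, 0]
      by decide]
    exact ⟨fun i => by fin_cases i <;> simp <;> omega, by constructor <;> simp <;> omega⟩

end CliqueBounds

namespace IsHPartition

variable {V : Type*} {G : SimpleGraph V} {A : Fin 7 → Set V}

lemma exists_mem (hP : IsHPartition G A) (v : V) : ∃ i, v ∈ A i :=
  Set.mem_iUnion.1 (hP.covers ▸ Set.mem_univ v)

lemma ne_of_mem (hP : IsHPartition G A) {i j : Fin 7} (hij : i ≠ j) {x y : V} (hx : x ∈ A i)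
    (hy : y ∈ A j) : x ≠ y := by
  rintro rfl
  exact Set.disjoint_left.1 (hP.disjoint i j hij) hx hy

lemma neighborSet_subset_of_mem_one (hP : IsHPartition G A) {v : V} (hv : v ∈ A 1) :
    G.neighborSet v ⊆ A 0 ∪ A 1 ∪ A 2 := by
  intro w hw
  obtain ⟨i, hi⟩ := hP.exists_mem w
  fin_cases i
  exacts [.inl (.inl hi), .inl (.inr hi), .inr hi, (hP.a42.symm v hv w hi hw).elim,
    (hP.a25 v hv w hi hw).elim, (hP.a26 v hv w hi hw).elim, (hP.a27 v hv w hi hw).elim]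

lemma neighborSet_subset_of_mem_four (hP : IsHPartition G A) {v : V} (hv : v ∈ A 4) :
    G.neighborSet v ⊆ A 3 ∪ A 4 ∪ A 0 := by
  intro w hw
  obtain ⟨i, hi⟩ := hP.exists_mem w
  fin_cases i
  exacts [.inr hi, (hP.a25.symm v hv w hi hw).elim, (hP.a35.symm v hv w hi hw).elim,
    .inl (.inl hi), .inl (.inr hi), (hP.a56 v hv w hi hw).elim, (hP.a57 v hv w hi hw).elim]

lemma neighborSet_subset_of_mem_six (hP : IsHPartition G A) {v : V} (hv : v ∈ A 6) :
    G.neighborSet v ⊆ A 5 ∪ A 6 := by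
  intro w hw
  obtain ⟨i, hi⟩ := hP.exists_mem w
  fin_cases i
  exacts [(hP.a17.symm v hv w hi hw).elim, (hP.a27.symm v hv w hi hw).elim,
    (hP.a37.symm v hv w hi hw).elim, (hP.a47.symm v hv w hi hw).elim,
    (hP.a57.symm v hv w hi hw).elim, .inl hi, .inr hi]

lemma isClique_subset_supp_union (hP : IsHPartition G A) {K : Set V} (hK : G.IsClique K) {v : V}
    (hvK : v ∈ K) (hv : v ∈ A 6) :
    K ⊆ Subtype.val '' ((G.induce (A 6)).connectedComponentMk ⟨v, hv⟩).supp ∪ A 5 := by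
  intro x hx
  rcases hK.subset_insert_neighborSet hvK hx with rfl | hxv
  · exact .inl ⟨⟨x, hv⟩, rfl, rfl⟩
  rcases hP.neighborSet_subset_of_mem_six hv hxv with hx5 | hx6
  · exact .inr hx5
  · exact .inl ⟨⟨x, hx6⟩, ConnectedComponent.connectedComponentMk_eq_of_adj hxv.symm, rfl⟩

lemma isClique_subset_cases (hP : IsHPartition G A) {K : Set V} (hK : G.IsClique K) :
    K ⊆ A 0 ∪ A 1 ∨ K ⊆ A 1 ∪ A 2 ∨ K ⊆ A 3 ∪ A 4 ∨ K ⊆ A 4 ∪ A 0 ∨ K ⊆ A 0 ∪ A 5 ∨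
      K ⊆ A 2 ∪ A 3 ∪ A 5 ∨ ∃ C : (G.induce (A 6)).ConnectedComponent,
        (K ∩ Subtype.val '' C.supp).Nonempty ∧ K ⊆ Subtype.val '' C.supp ∪ A 5 := by
  by_cases h6 : ∃ v ∈ K, v ∈ A 6
  · obtain ⟨v, hvK, hv⟩ := h6
    exact .inr <| .inr <| .inr <| .inr <| .inr <| .inr
      ⟨_, ⟨v, hvK, ⟨v, hv⟩, rfl, rfl⟩, hP.isClique_subset_supp_union hK hvK hv⟩
  by_cases h1 : ∃ v ∈ K, v ∈ A 1
  · obtain ⟨v, hvK, hv⟩ := h1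
    have hsub := (hK.subset_insert_neighborSet hvK).trans
      (Set.insert_subset (.inl (.inr hv)) (hP.neighborSet_subset_of_mem_one hv))
    have := hK.subset_union_or_subset_union hsub hP.a13 (hP.disjoint 0 2 (by decide))
    tauto
  by_cases h4 : ∃ v ∈ K, v ∈ A 4
  · obtain ⟨v, hvK, hv⟩ := h4
    have hsub := (hK.subset_insert_neighborSet hvK).trans
      (Set.insert_subset (.inl (.inr hv)) (hP.neighborSet_subset_of_mem_four hv))
    have := hK.subset_union_or_subset_union hsub hP.a14.symm (hP.disjoint 3 0 (by decide))
    tauto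
  have hsub : K ⊆ A 0 ∪ A 5 ∪ (A 2 ∪ A 3) := by
    intro x hx
    obtain ⟨i, hi⟩ := hP.exists_mem x
    fin_cases i
    exacts [.inl (.inl hi), (h1 ⟨x, hx, hi⟩).elim, .inr (.inl hi), .inr (.inr hi),
      (h4 ⟨x, hx, hi⟩).elim, .inl (.inr hi), (h6 ⟨x, hx, hi⟩).elim]
  have := hK.subset_union_or_subset_union hsub (AnticompleteTo.union_right hP.a13 hP.a14)
    ((hP.disjoint 0 2 (by decide)).union_right (hP.disjoint 0 3 (by decide)))
  rw [Set.union_comm (A 5)] at this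
  tauto

lemma ncard_neighborSet_lt_of_mem_one [Finite V] (hP : IsHPartition G A) {v : V}
    (hv : v ∈ A 1) : (G.neighborSet v).ncard < (A 0).ncard + (A 1).ncard + (A 2).ncard :=
  (G.ncard_neighborSet_lt_of_subset (hP.neighborSet_subset_of_mem_one hv)
    (.inl (.inr hv))).trans_le
    ((Set.ncard_union_le _ _).trans (Nat.add_le_add_right (Set.ncard_union_le _ _) _))

lemma ncard_neighborSet_lt_of_mem_four [Finite V] (hP : IsHPartition G A) {v : V}
    (hv : v ∈ A 4) : (G.neighborSet v).ncard < (A 3).ncard + (A 4).ncard + (A 0).ncard :=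
  (G.ncard_neighborSet_lt_of_subset (hP.neighborSet_subset_of_mem_four hv)
    (.inl (.inr hv))).trans_le
    ((Set.ncard_union_le _ _).trans (Nat.add_le_add_right (Set.ncard_union_le _ _) _))

lemma two_le_ncard_one [Finite V] (hP : IsHPartition G A)
    (hdom : ∀ u v, u ≠ v → ¬ G.neighborSet u ⊆ G.neighborSet v) : 2 ≤ (A 1).ncard := by
  obtain ⟨u, hu⟩ := hP.nonempty 1
  obtain ⟨v, hv⟩ := hP.nonempty 5
  by_contra! h
  refine hdom u v (hP.ne_of_mem (by decide) hu hv) fun w hw => ?_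
  rcases hP.neighborSet_subset_of_mem_one hu hw with (hw0 | hw1) | hw2
  · exact (hP.c16 w hw0 v hv).symm
  · obtain rfl := ((Set.ncard_le_one_iff (A 1).toFinite).1 (Nat.le_of_lt_succ h)) hw1 hu
    exact absurd hw G.irrefl
  · exact (hP.c36 w hw2 v hv).symm

lemma two_le_ncard_four [Finite V] (hP : IsHPartition G A)
    (hdom : ∀ u v, u ≠ v → ¬ G.neighborSet u ⊆ G.neighborSet v) : 2 ≤ (A 4).ncard := by
  obtain ⟨u, hu⟩ := hP.nonempty 4
  obtain ⟨v, hv⟩ := hP.nonempty 5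
  by_contra! h
  refine hdom u v (hP.ne_of_mem (by decide) hu hv) fun w hw => ?_
  rcases hP.neighborSet_subset_of_mem_four hu hw with (hw3 | hw4) | hw0
  · exact (hP.c46 w hw3 v hv).symm
  · obtain rfl := ((Set.ncard_le_one_iff (A 4).toFinite).1 (Nat.le_of_lt_succ h)) hw4 hu
    exact absurd hw G.irrefl
  · exact (hP.c16 w hw0 v hv).symm

lemma one_le_cliqueNum_induce_five [Finite V] (hP : IsHPartition G A) :
    1 ≤ (G.induce (A 5)).cliqueNum := by
  obtain ⟨v, hv⟩ := hP.nonempty 5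
  simpa using (G.isClique_singleton v).ncard_le_cliqueNum_induce (Set.singleton_subset_iff.2 hv)

lemma anticompleteTo_of_mem_cycleNonadjPairs (hP : IsHPartition G A) {i j : Fin 7}
    (h : (i, j) ∈ cycleNonadjPairs) :
    AnticompleteTo G (A i) (A j) ∧ AnticompleteTo G (A 6) (A i ∪ A j) := by
  simp only [cycleNonadjPairs, Finset.mem_insert, Finset.mem_singleton, Prod.mk.injEq] at h
  rcases h with ⟨rfl, rfl⟩ | ⟨rfl, rfl⟩ | ⟨rfl, rfl⟩ | ⟨rfl, rfl⟩ | ⟨rfl, rfl⟩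
  exacts [⟨hP.a13, .union_right hP.a17.symm hP.a37.symm⟩,
    ⟨hP.a14, .union_right hP.a17.symm hP.a47.symm⟩,
    ⟨hP.a42.symm, .union_right hP.a27.symm hP.a47.symm⟩,
    ⟨hP.a25, .union_right hP.a27.symm hP.a57.symm⟩,
    ⟨hP.a35, .union_right hP.a37.symm hP.a57.symm⟩]

lemma isIndepSet_pair_union (hP : IsHPartition G A) {i j : Fin 7}
    (h : (i, j) ∈ cycleNonadjPairs) {x y : V} (hx : x ∈ A i) (hy : y ∈ A j) {Q : Set V}
    (hQ6 : Q ⊆ A 6) (hQ : G.IsIndepSet Q) : G.IsIndepSet ({x, y} ∪ Q) := by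
  obtain ⟨hij, h6⟩ := hP.anticompleteTo_of_mem_cycleNonadjPairs h
  rintro a ha b hb hab hadj
  rcases ha with (rfl | rfl) | ha <;> rcases hb with (rfl | rfl) | hb
  exacts [hab rfl, hij _ hx _ hy hadj, h6 _ (hQ6 hb) _ (.inl hx) hadj.symm,
    hij _ hx _ hy hadj.symm, hab rfl, h6 _ (hQ6 hb) _ (.inr hy) hadj.symm,
    h6 _ (hQ6 ha) _ (.inl hx) hadj, h6 _ (hQ6 ha) _ (.inr hy) hadj, hQ ha hb hab hadj]

lemma exists_isIndepSet_of_design [Finite V] (hP : IsHPartition G A)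
    {d : Fin 5 → Fin 2 → Fin 7} (hd : ∀ j, (d j 0, d j 1) ∈ cycleNonadjPairs)
    (hdA : ∀ i, blockCount d i ≤ (A i).ncard) :
    ∃ S : Fin 5 → Set V, (∀ j, G.IsIndepSet (S j)) ∧ (⋃ j, S j).Nonempty ∧
      (∀ i, (A i \ ⋃ j, S j).ncard + blockCount d i ≤ (A i).ncard) ∧
      ∀ C : (G.induce (A 6)).ConnectedComponent,
        min 5 (Subtype.val '' C.supp).ncard ≤ (Subtype.val '' C.supp ∩ ⋃ j, S j).ncard := by
  obtain ⟨f, hf, hfA⟩ := exists_injective_forall_mem (fun i j => hP.disjoint i j)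
    (fun m : Fin 5 × Fin 2 => d m.1 m.2) hdA
  obtain ⟨P, hPi, hPC⟩ := (G.induce (A 6)).exists_isIndepSet_min_le_ncard_supp_inter 5
  let Q : Fin 5 → Set V := fun j => Subtype.val '' P j
  have hQ6 : ∀ j, Q j ⊆ A 6 := by
    rintro j _ ⟨a, -, rfl⟩
    exact a.2
  have hQ : ∀ j, G.IsIndepSet (Q j) := by
    rintro j _ ⟨a, ha, rfl⟩ _ ⟨b, hb, rfl⟩ hab
    exact hPi j ha hb (ne_of_apply_ne _ hab)
  refine ⟨fun j => {f (j, 0), f (j, 1)} ∪ Q j,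
    fun j => hP.isIndepSet_pair_union (hd j) (hfA (j, 0)) (hfA (j, 1)) (hQ6 j) (hQ j),
    ⟨f (0, 0), Set.mem_iUnion.2 ⟨0, .inl (.inl rfl)⟩⟩, fun i => ?_, fun C => ?_⟩
  · have hcount : blockCount d i = (f '' {m | d m.1 m.2 = i}).ncard := by
      rw [Set.ncard_image_of_injective _ hf, blockCount, ← Set.ncard_coe_finset]
      simp
    have hsub : f '' {m | d m.1 m.2 = i} ⊆ A i ∩ ⋃ j, {f (j, 0), f (j, 1)} ∪ Q j := by
      rintro _ ⟨⟨j, r⟩, rfl : d j r = i, rfl⟩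
      refine ⟨hfA (j, r), Set.mem_iUnion.2 ⟨j, .inl ?_⟩⟩
      fin_cases r
      exacts [.inl rfl, .inr rfl]
    rw [hcount, ← Set.ncard_inter_add_ncard_sdiff_eq_ncard (A i), add_comm]
    exact Nat.add_le_add_right (Set.ncard_le_ncard hsub) _
  · refine le_trans ?_ (Set.ncard_le_ncard
      (Set.inter_subset_inter_right _ (Set.iUnion_mono fun j => Set.subset_union_right)))
    rw [← Set.image_iUnion, ← Set.image_inter Subtype.val_injective,
      Set.ncard_image_of_injective _ Subtype.val_injective,
      Set.ncard_image_of_injective _ Subtype.val_injective]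
    exact hPC C

end IsHPartition

namespace IsHStarPartition

variable {V : Type*} [Finite V] {G : SimpleGraph V} {A : Fin 7 → Set V}

lemma cliqueBounds (hA : IsHStarPartition G A) :
    CliqueBounds (fun i => (A i).ncard) (G.induce (A 5)).cliqueNum G.cliqueNum := by
  obtain ⟨hP, hcl, -⟩ := hA
  obtain ⟨K, hK5, hK, hKκ⟩ := G.exists_isClique_ncard_eq_cliqueNum_induce (A 5)
  have hK0 : CompleteTo G (A 0) K := fun x hx y hy => hP.c16 x hx y (hK5 hy)
  have h23 : G.IsClique (A 2 ∪ A 3) :=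
    (hcl 2 (by decide)).union_of_completeTo (hcl 3 (by decide)) hP.c34
  have h23K : CompleteTo G (A 2 ∪ A 3) K := fun x hx y hy =>
    hx.elim (fun h => hP.c36 x h y (hK5 hy)) (fun h => hP.c46 x h y (hK5 hy))
  refine ⟨ncard_add_ncard_le_cliqueNum (hcl 0 (by decide)) (hcl 1 (by decide)) hP.c12,
    ncard_add_ncard_le_cliqueNum (hcl 1 (by decide)) (hcl 2 (by decide)) hP.c32.symm,
    ncard_add_ncard_le_cliqueNum (hcl 3 (by decide)) (hcl 4 (by decide)) hP.c45,
    ncard_add_ncard_le_cliqueNum (hcl 4 (by decide)) (hcl 0 (by decide)) hP.c15.symm,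
    hKκ ▸ ncard_add_ncard_le_cliqueNum (hcl 0 (by decide)) hK hK0, ?_⟩
  rw [← hKκ, ← Set.ncard_union_eq (hP.disjoint 2 3 (by decide))]
  exact ncard_add_ncard_le_cliqueNum h23 hK h23K

lemma ncard_add_five_le_of_subset_supp_union (hA : IsHStarPartition G A) {T K : Set V}
    (hKT : K ⊆ Tᶜ) (hK : G.IsClique K) {C : (G.induce (A 6)).ConnectedComponent}
    (hC : min 5 (Subtype.val '' C.supp).ncard ≤ (Subtype.val '' C.supp ∩ T).ncard)
    {v : V} (hvK : v ∈ K) (hvC : v ∈ Subtype.val '' C.supp)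
    (h : K ⊆ Subtype.val '' C.supp ∪ A 5) : K.ncard + 5 ≤ G.cliqueNum := by
  set U := Subtype.val '' C.supp
  have hU6 : U ⊆ A 6 := by
    rintro _ ⟨a, -, rfl⟩
    exact a.2
  -- Every vertex of `K ∩ A 5` is adjacent to `v ∈ U`, hence, by homogeneity, to all of `U`.
  have hUK : U.ncard + (K ∩ A 5).ncard ≤ G.cliqueNum := by
    refine ncard_add_ncard_le_cliqueNum (hA.2.2 C) (hK.subset Set.inter_subset_left)
      fun u hu w hw => (hA.1.hom C w (fun hwU => ?_) ⟨v, hvC, ?_⟩ u hu).symm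
    · exact hA.1.ne_of_mem (by decide) hw.2 (hU6 hwU) rfl
    · exact hK hw.1 hvK (hA.1.ne_of_mem (by decide) hw.2 (hU6 hvC))
  have hUT : (U ∩ T).ncard < U.ncard := Set.ncard_lt_ncard
    (ssubset_of_subset_not_superset Set.inter_subset_left fun hsub => hKT hvK (hsub hvC).2)
  have := Set.ncard_inter_add_ncard_sdiff_eq_ncard U T
  have := Set.ncard_le_ncard_sdiff_add_ncard_inter hKT h
  omega

lemma cliqueNum_induce_compl_le (hA : IsHStarPartition G A) {T : Set V}
    (hT : CliqueBounds (fun i => (A i \ T).ncard) (G.induce (A 5)).cliqueNum (G.cliqueNum - 4))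
    (hU : ∀ C : (G.induce (A 6)).ConnectedComponent,
      min 5 (Subtype.val '' C.supp).ncard ≤ (Subtype.val '' C.supp ∩ T).ncard) :
    (G.induce Tᶜ).cliqueNum ≤ G.cliqueNum - 4 := by
  obtain ⟨K, hKT, hK, hKcard⟩ := G.exists_isClique_ncard_eq_cliqueNum_induce Tᶜ
  rw [← hKcard]
  have hcycle : ∀ {i j : Fin 7}, K ⊆ A i ∪ A j → K.ncard ≤ (A i \ T).ncard + (A j \ T).ncard :=
    fun {_ j} h => (Set.ncard_le_ncard_sdiff_add_ncard_inter hKT h).trans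
      (Nat.add_le_add_left (Set.ncard_le_ncard (t := A j \ T) fun x hx => ⟨hx.2, hKT hx.1⟩) _)
  have hK5 : (K ∩ A 5).ncard ≤ (G.induce (A 5)).cliqueNum :=
    (hK.subset Set.inter_subset_left).ncard_le_cliqueNum_induce Set.inter_subset_right
  have h23 : ((A 2 ∪ A 3) \ T).ncard ≤ (A 2 \ T).ncard + (A 3 \ T).ncard := by
    rw [Set.union_sdiff_distrib]
    exact Set.ncard_union_le _ _
  obtain ⟨h01, h12, h34, h40, h05, h235⟩ := hT
  rcases hA.1.isClique_subset_cases hK with h | h | h | h | h | h | ⟨C, ⟨v, hvK, hvC⟩, h⟩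
  · exact (hcycle h).trans h01
  · exact (hcycle h).trans h12
  · exact (hcycle h).trans h34
  · exact (hcycle h).trans h40
  · exact (Set.ncard_le_ncard_sdiff_add_ncard_inter hKT h).trans (by omega)
  · exact (Set.ncard_le_ncard_sdiff_add_ncard_inter hKT h).trans (by omega)
  · have := hA.ncard_add_five_le_of_subset_supp_union hKT hK (hU C) hvK hvC h
    omega

lemma colorable_of_design (hA : IsHStarPartition G A)
    (hind : ∀ s : Set V, s ≠ Set.univ →
      (G.induce s).chromaticNumber ≤ ((5 * (G.induce s).cliqueNum ⌈/⌉ 4 : ℕ) : ℕ∞))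
    {d : Fin 5 → Fin 2 → Fin 7} (hd : ∀ j, (d j 0, d j 1) ∈ cycleNonadjPairs)
    (hdA : ∀ i, blockCount d i ≤ (A i).ncard)
    (hdb : CliqueBounds (fun i => (A i).ncard - blockCount d i) (G.induce (A 5)).cliqueNum
      (G.cliqueNum - 4))
    (hω : 4 ≤ G.cliqueNum) : G.Colorable (5 * G.cliqueNum ⌈/⌉ 4) := by
  obtain ⟨S, hS, hne, hSA, hSU⟩ := hA.1.exists_isIndepSet_of_design hd hdA
  have hW := chromaticNumber_le_iff_colorable.1 (hind _ (Set.compl_ne_univ.2 hne))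
  have hcl := hA.cliqueNum_induce_compl_le (hdb.mono fun i => by have := hSA i; omega) hSU
  have := Colorable.of_induce_compl_iUnion_isIndepSet hS
    (hW.mono (five_mul_ceilDiv_four_mono hcl))
  rwa [Fintype.card_fin, five_mul_sub_four_ceilDiv_four_add_five hω] at this

end IsHStarPartition

/-- If `G` is in the class `H*` and every proper induced subgraph `G'` of `G` satisfies
`χ(G') ≤ ⌈5·ω(G')/4⌉`, then `χ(G) ≤ ⌈5·ω(G)/4⌉`. -/
theorem classHStar_bound {V : Type*} [Fintype V] (G : SimpleGraph V)
    (hG : InClassHStar G)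
    (hind : ∀ s : Set V, s ≠ Set.univ →
      (G.induce s).chromaticNumber ≤ ((5 * (G.induce s).cliqueNum ⌈/⌉ 4 : ℕ) : ℕ∞)) :
    G.chromaticNumber ≤ ((5 * G.cliqueNum ⌈/⌉ 4 : ℕ) : ℕ∞) := by
  obtain ⟨-, -, A, hA⟩ := hG
  rw [chromaticNumber_le_iff_colorable]
  by_contra hχ
  have hsub : ∀ s : Set V, s ≠ Set.univ → (G.induce s).Colorable (5 * G.cliqueNum ⌈/⌉ 4) :=
    fun s hs => (chromaticNumber_le_iff_colorable.1 (hind s hs)).mono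
      (five_mul_ceilDiv_four_mono (cliqueNum_induce_le s))
  have hdeg : ∀ v, 5 * G.cliqueNum ⌈/⌉ 4 ≤ (G.neighborSet v).ncard := fun v => not_lt.1 fun h =>
    hχ (.of_induce_compl_singleton_of_ncard_neighborSet_lt h (hsub _ (by simp)))
  have hdom : ∀ u v, u ≠ v → ¬ G.neighborSet u ⊆ G.neighborSet v := fun u v huv h =>
    hχ (.of_induce_compl_singleton_of_neighborSet_subset huv h (hsub _ (by simp)))
  obtain ⟨u, hu⟩ := hA.1.nonempty 1
  obtain ⟨w, hw⟩ := hA.1.nonempty 4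
  obtain ⟨hω, d, hd, hdA, hdb⟩ := hA.cliqueBounds.exists_design
    hA.1.one_le_cliqueNum_induce_five (hA.1.two_le_ncard_one hdom) (hA.1.two_le_ncard_four hdom)
    ((hdeg u).trans_lt (hA.1.ncard_neighborSet_lt_of_mem_one hu))
    ((hdeg w).trans_lt (hA.1.ncard_neighborSet_lt_of_mem_four hw))
  exact hχ (hA.colorable_of_design hind hd hdA hdb hω)
end
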